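/- Suppose the asset payoffs Y = (Y₀, Y₁, …, Yₙ) are integrable, let R be an integrable random variable (the residual liability), α ∈ (0,1), and let η ∈ ℝ^{n+1} be a minimizer over β ∈ ℝ^{n+1} of E[ℓ_α(R − β·Y)]. Let β ∈ ℝ^{n+1} be any strategy with VaR_α(R − β·Y) = 0, and assume the cumulative distribution functions of R − η·Y and of R − β·Y are continuous. Then dTVaR_α(R − η·Y) ≤ dTVaR_α(R − β·Y); that is, the quantile hedging strategy minimizes the TVaR deviation of the residual among all strategies satisfying the VaR constraint. -/

import Mathlib

open MeasureTheory

/-- Value-at-Risk at level `α`: `VaR_α(X) = inf {x ∈ ℝ : P(X ≤ x) ≥ α}`. -/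
noncomputable def VaR {Ω : Type*} [MeasureSpace Ω] (X : Ω → ℝ) (α : ℝ) : ℝ :=
  sInf {x : ℝ | α ≤ (volume {ω | X ω ≤ x}).toReal}

/-- Tail Value-at-Risk at level `α`: `TVaR_α(X) = (1/(1−α))·∫_α^1 VaR_u(X) du`. -/
noncomputable def TVaR {Ω : Type*} [MeasureSpace Ω] (X : Ω → ℝ) (α : ℝ) : ℝ :=
  (1 / (1 - α)) * ∫ u in α..1, VaR X u

/-- The TVaR deviation: `dTVaR_α(X) = TVaR_α(X) − E[X]`. -/
noncomputable def dTVaR {Ω : Type*} [MeasureSpace Ω] (X : Ω → ℝ) (α : ℝ) : ℝ :=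
  TVaR X α - ∫ ω, X ω

/-- The normalised Koenker–Bassett loss at level `α`:
`ℓ_α(x) = (α/(1−α))·max(x,0) + max(−x,0)`. -/
noncomputable def KBLoss (α x : ℝ) : ℝ :=
  α / (1 - α) * max x 0 + max (-x) 0

/-! The quantile function `u ↦ VaR_u(X)` pushes the uniform law on `(0, 1)` forward to the law
of `X`, hence `∫₀¹ max (VaR_u X) 0 du = E[X⁺]`. Bounding `VaR_u X` by its positive part gives
`∫_α^1 VaR_u X du ≤ E[X⁺]`, with equality when `VaR_α X = 0`, since then monotonicity makes
`VaR_u X` nonnegative exactly on `(α, 1)`. As `E[ℓ_α(X)] = E[X⁺] / (1 - α) - E[X]`, this says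
`dTVaR_α X ≤ E[ℓ_α(X)]`, with equality under the VaR constraint; the minimality of `η` closes the
chain `dTVaR_α(R − η·Y) ≤ E[ℓ_α(R − η·Y)] ≤ E[ℓ_α(R − β·Y)] = dTVaR_α(R − β·Y)`. -/

open Set Filter Topology ProbabilityTheory

noncomputable def quantile (μ : Measure ℝ) (u : ℝ) : ℝ := sInf {x | u ≤ cdf μ x}

section Quantile

variable (μ : Measure ℝ) {u : ℝ}

lemma quantile_le_iff (hu : u ∈ Ioo (0 : ℝ) 1) (y : ℝ) : quantile μ u ≤ y ↔ u ≤ cdf μ y := by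
  have hne : {x | u ≤ cdf μ x}.Nonempty :=
    ((tendsto_cdf_atTop μ).eventually (eventually_ge_nhds hu.2)).exists
  have hbdd : BddBelow {x | u ≤ cdf μ x} := by
    obtain ⟨a, ha⟩ := eventually_atBot.1
      ((tendsto_cdf_atBot μ).eventually (eventually_lt_nhds hu.1))
    exact ⟨a, fun x hx => not_lt.1 fun hxa => (ha x hxa.le).not_ge hx⟩
  refine ⟨fun h => ?_, fun h => csInf_le hbdd h⟩
  have hright : ∀ᶠ y' in 𝓝[>] y, u ≤ cdf μ y' := by
    filter_upwards [self_mem_nhdsWithin] with y' hy'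
    obtain ⟨x, hx, hxy⟩ := exists_lt_of_csInf_lt hne (h.trans_lt hy')
    exact hx.trans (monotone_cdf μ hxy.le)
  exact ge_of_tendsto (((cdf μ).right_continuous y).mono Ioi_subset_Ici_self) hright

lemma monotoneOn_quantile : MonotoneOn (quantile μ) (Ioo 0 1) := fun _ hu _ hv huv =>
  (quantile_le_iff μ hu _).2 (huv.trans ((quantile_le_iff μ hv _).1 le_rfl))

lemma aemeasurable_quantile : AEMeasurable (quantile μ) (volume.restrict (Ioo (0 : ℝ) 1)) :=
  aemeasurable_restrict_of_monotoneOn measurableSet_Ioo (monotoneOn_quantile μ)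

lemma map_quantile_restrict_Ioo [IsProbabilityMeasure μ] :
    (volume.restrict (Ioo (0 : ℝ) 1)).map (quantile μ) = μ := by
  refine Measure.ext_of_Iic _ _ fun y => ?_
  have hpre : quantile μ ⁻¹' Iic y ∩ Ioo 0 1 = Ioc 0 (cdf μ y) ∩ Ioo 0 1 := by
    ext u
    simp only [mem_inter_iff, mem_preimage, mem_Iic, mem_Ioc]
    exact ⟨fun ⟨h, hu⟩ => ⟨⟨hu.1, (quantile_le_iff μ hu y).1 h⟩, hu⟩,
      fun ⟨h, hu⟩ => ⟨(quantile_le_iff μ hu y).2 h.2, hu⟩⟩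
  rw [Measure.map_apply_of_aemeasurable (aemeasurable_quantile μ) measurableSet_Iic,
    Measure.restrict_apply' measurableSet_Ioo, hpre, ← Measure.restrict_apply' measurableSet_Ioo,
    Measure.restrict_congr_set Ioo_ae_eq_Ioc, Measure.restrict_apply' measurableSet_Ioc,
    inter_eq_left.2 (Ioc_subset_Ioc_right (cdf_le_one μ y)), Real.volume_Ioc, sub_zero,
    ofReal_cdf]

lemma integrableOn_comp_quantile_iff [IsProbabilityMeasure μ] {g : ℝ → ℝ}
    (hg : AEStronglyMeasurable g μ) :
    IntegrableOn (g ∘ quantile μ) (Ioo 0 1) ↔ Integrable g μ := by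
  have hmap := map_quantile_restrict_Ioo μ
  rw [IntegrableOn, ← integrable_map_measure (by rwa [hmap]) (aemeasurable_quantile μ), hmap]

lemma setIntegral_comp_quantile [IsProbabilityMeasure μ] {g : ℝ → ℝ}
    (hg : AEStronglyMeasurable g μ) :
    ∫ u in Ioo 0 1, g (quantile μ u) = ∫ x, g x ∂μ := by
  have hmap := map_quantile_restrict_Ioo μ
  rw [← integral_map (aemeasurable_quantile μ) (by rwa [hmap]), hmap]

end Quantile

section Tail

variable {f : ℝ → ℝ} {α : ℝ}

lemma intervalIntegral_eq_setIntegral_indicator (hα₀ : 0 ≤ α) (hα₁ : α ≤ 1) :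
    ∫ u in α..1, f u = ∫ u in Ioo 0 1, (Ioi α).indicator f u := by
  rw [intervalIntegral.integral_of_le hα₁, integral_Ioc_eq_integral_Ioo,
    setIntegral_indicator measurableSet_Ioi, Ioo_inter_Ioi, max_eq_right hα₀]

lemma intervalIntegral_le_setIntegral_max (hf : IntegrableOn f (Ioo 0 1)) (hα₀ : 0 ≤ α)
    (hα₁ : α ≤ 1) : ∫ u in α..1, f u ≤ ∫ u in Ioo 0 1, max (f u) 0 := by
  rw [intervalIntegral_eq_setIntegral_indicator hα₀ hα₁]
  refine setIntegral_mono (hf.indicator measurableSet_Ioi) hf.pos_part fun u => ?_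
  by_cases hu : u ∈ Ioi α
  · simp only [indicator_of_mem hu, le_max_left]
  · simp only [indicator_of_notMem hu, le_max_right]

lemma intervalIntegral_eq_setIntegral_max (hf : MonotoneOn f (Ioo 0 1))
    (hα : α ∈ Ioo (0 : ℝ) 1) (hfα : f α = 0) :
    ∫ u in α..1, f u = ∫ u in Ioo 0 1, max (f u) 0 := by
  rw [intervalIntegral_eq_setIntegral_indicator hα.1.le hα.2.le]
  refine setIntegral_congr_fun measurableSet_Ioo fun u hu => ?_
  rcases lt_or_ge α u with hαu | huα
  · rw [indicator_of_mem (mem_Ioi.2 hαu), max_eq_left (hfα ▸ hf hα hu hαu.le)]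
  · rw [indicator_of_notMem (notMem_Ioi.2 huα), max_eq_right (hfα ▸ hf hu hα huα)]

end Tail

lemma KBLoss_eq {α : ℝ} (hα : α ≠ 1) (x : ℝ) : KBLoss α x = 1 / (1 - α) * max x 0 - x := by
  have h1α : 1 - α ≠ 0 := sub_ne_zero.2 hα.symm
  have hsplit : max (-x) 0 = max x 0 - x := by linarith [max_zero_sub_eq_self x]
  rw [KBLoss, hsplit]
  field_simp
  ring

lemma integral_KBLoss {Ω : Type*} [MeasurableSpace Ω] {μ : Measure Ω} {X : Ω → ℝ} {α : ℝ}
    (hX : Integrable X μ) (hα : α ≠ 1) :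
    ∫ ω, KBLoss α (X ω) ∂μ = 1 / (1 - α) * (∫ ω, max (X ω) 0 ∂μ) - ∫ ω, X ω ∂μ := by
  simp_rw [KBLoss_eq hα]
  rw [integral_sub (hX.pos_part.const_mul _) hX, integral_const_mul]

section RiskMeasures

variable {Ω : Type*} [MeasureSpace Ω] [IsProbabilityMeasure (volume : Measure Ω)]
  {X : Ω → ℝ} {α : ℝ}

lemma VaR_eq_quantile_map (hX : AEMeasurable X) : VaR X = quantile (volume.map X) := by
  have := Measure.isProbabilityMeasure_map hX
  ext u
  simp only [VaR, quantile, cdf_eq_real, measureReal_def,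
    Measure.map_apply_of_aemeasurable hX measurableSet_Iic]
  rfl

lemma monotoneOn_VaR (hX : AEMeasurable X) : MonotoneOn (VaR X) (Ioo 0 1) := by
  rw [VaR_eq_quantile_map hX]
  exact monotoneOn_quantile _

lemma integrableOn_VaR (hX : Integrable X) : IntegrableOn (VaR X) (Ioo 0 1) := by
  have := Measure.isProbabilityMeasure_map hX.aemeasurable
  rw [VaR_eq_quantile_map hX.aemeasurable]
  exact (integrableOn_comp_quantile_iff _ aestronglyMeasurable_id).2
    ((integrable_map_measure aestronglyMeasurable_id hX.aemeasurable).2 hX)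

lemma setIntegral_max_VaR (hX : AEMeasurable X) :
    ∫ u in Ioo 0 1, max (VaR X u) 0 = ∫ ω, max (X ω) 0 := by
  have := Measure.isProbabilityMeasure_map hX
  have hmax : Measurable fun x : ℝ => max x 0 := measurable_id.max measurable_const
  rw [VaR_eq_quantile_map hX, setIntegral_comp_quantile _ hmax.aestronglyMeasurable,
    integral_map hX hmax.aestronglyMeasurable]

lemma dTVaR_le_integral_KBLoss (hX : Integrable X) (hα₀ : 0 ≤ α) (hα₁ : α < 1) :
    dTVaR X α ≤ ∫ ω, KBLoss α (X ω) := by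
  rw [integral_KBLoss hX hα₁.ne, dTVaR, TVaR, ← setIntegral_max_VaR hX.aemeasurable]
  gcongr
  exact intervalIntegral_le_setIntegral_max (integrableOn_VaR hX) hα₀ hα₁.le

lemma dTVaR_eq_integral_KBLoss (hX : Integrable X) (hα : α ∈ Ioo (0 : ℝ) 1)
    (hVaR : VaR X α = 0) : dTVaR X α = ∫ ω, KBLoss α (X ω) := by
  rw [integral_KBLoss hX hα.2.ne, dTVaR, TVaR, ← setIntegral_max_VaR hX.aemeasurable,
    intervalIntegral_eq_setIntegral_max (monotoneOn_VaR hX.aemeasurable) hα hVaR]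

end RiskMeasures

theorem quantile_hedge_minimizes_dTVaR_general
    {Ω : Type*} [MeasureSpace Ω] [IsProbabilityMeasure (volume : Measure Ω)]
    (n : ℕ) (Y : Fin (n + 1) → Ω → ℝ)
    (hY : ∀ i, Integrable (Y i) volume)
    (R : Ω → ℝ) (hR : Integrable R volume)
    (α : ℝ) (hα : α ∈ Set.Ioo (0 : ℝ) 1)
    (η : Fin (n + 1) → ℝ)
    (hη : ∀ β : Fin (n + 1) → ℝ,
      (∫ ω, KBLoss α (R ω - ∑ i, η i * Y i ω))
        ≤ ∫ ω, KBLoss α (R ω - ∑ i, β i * Y i ω))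
    (β : Fin (n + 1) → ℝ)
    (hβVaR : VaR (fun ω => R ω - ∑ i, β i * Y i ω) α = 0) :
    dTVaR (fun ω => R ω - ∑ i, η i * Y i ω) α
      ≤ dTVaR (fun ω => R ω - ∑ i, β i * Y i ω) α := by
  have hresidual : ∀ γ : Fin (n + 1) → ℝ, Integrable (fun ω => R ω - ∑ i, γ i * Y i ω) :=
    fun γ => hR.sub (integrable_finsetSum _ fun i _ => (hY i).const_mul (γ i))
  calc dTVaR (fun ω => R ω - ∑ i, η i * Y i ω) α
      ≤ ∫ ω, KBLoss α (R ω - ∑ i, η i * Y i ω) :=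
        dTVaR_le_integral_KBLoss (hresidual η) hα.1.le hα.2
    _ ≤ ∫ ω, KBLoss α (R ω - ∑ i, β i * Y i ω) := hη β
    _ = dTVaR (fun ω => R ω - ∑ i, β i * Y i ω) α :=
        (dTVaR_eq_integral_KBLoss (hresidual β) hα hβVaR).symm

/-- The quantile hedging strategy minimizes the TVaR deviation of the residual
among all strategies satisfying the VaR-neutrality constraint: if `η` minimizes
`β ↦ E[ℓ_α(R − β·Y)]` and `β` satisfies `VaR_α(R − β·Y) = 0`, then (under continuity of the
residuals' cdfs) `dTVaR_α(R − η·Y) ≤ dTVaR_α(R − β·Y)`. -/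
theorem quantile_hedge_minimizes_dTVaR
    {Ω : Type*} [MeasureSpace Ω] [IsProbabilityMeasure (volume : Measure Ω)]
    (n : ℕ) (Y : Fin (n + 1) → Ω → ℝ)
    (hY : ∀ i, Integrable (Y i) volume)
    (R : Ω → ℝ) (hR : Integrable R volume)
    (α : ℝ) (hα : α ∈ Set.Ioo (0 : ℝ) 1)
    (η : Fin (n + 1) → ℝ)
    (hη : ∀ β : Fin (n + 1) → ℝ,
      (∫ ω, KBLoss α (R ω - ∑ i, η i * Y i ω))
        ≤ ∫ ω, KBLoss α (R ω - ∑ i, β i * Y i ω))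
    (β : Fin (n + 1) → ℝ)
    (hβVaR : VaR (fun ω => R ω - ∑ i, β i * Y i ω) α = 0)
    (hcdfη : Continuous fun x : ℝ =>
      (volume {ω | R ω - ∑ i, η i * Y i ω ≤ x}).toReal)
    (hcdfβ : Continuous fun x : ℝ =>
      (volume {ω | R ω - ∑ i, β i * Y i ω ≤ x}).toReal) :
    dTVaR (fun ω => R ω - ∑ i, η i * Y i ω) α
      ≤ dTVaR (fun ω => R ω - ∑ i, β i * Y i ω) α :=
  quantile_hedge_minimizes_dTVaR_general n Y hY R hR α hα η hη β hβVaR
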